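/- arXiv:1808.01078 — 2 statements merged into one kernel-verified Lean document; each statement's English description precedes it below -/
import Mathlib

section
/- Let P be an n×n complex matrix polynomial of degree d, let ℓ ≥ 1 divide d with k = d/ℓ, and let ℒ(λ) be an (ε,n,η,n)-block Kronecker ℓ-ification of P built from a solution M(λ) of (Λ_η(λ^ℓ)^T ⊗ I_n) M(λ) (Λ_ε(λ^ℓ) ⊗ I_n) = P(λ). Then the right-sided factorization ℒ(λ) · H(λ; ε, η, M) = e_{η+1} ⊗ P(λ) holds as an identity of matrix polynomials, i.e., viewing the kn×n product as a column of k blocks of size n×n, the (η+1)-st block equals P(λ) and all other blocks are 0. -/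
open Matrix BigOperators

noncomputable section

/-- Evaluation at `x` of the matrix polynomial with coefficients `C 0, …, C N`. -/
def mpEval {α β : Type*} (N : ℕ) (C : ℕ → Matrix α β ℂ) (x : ℂ) : Matrix α β ℂ :=
  ∑ i ∈ Finset.range (N + 1), x ^ i • C i

/-- Entrywise derivative of the matrix polynomial, evaluated at `x`. -/
def mpDer {α β : Type*} (N : ℕ) (C : ℕ → Matrix α β ℂ) (x : ℂ) : Matrix α β ℂ :=
  ∑ i ∈ Finset.range (N + 1), ((i : ℂ) * x ^ (i - 1)) • C i

/-- Spectral norm (operator 2-norm, i.e. largest singular value) of a complex matrix. -/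
def sNorm {α β : Type*} [Fintype α] [Fintype β] [DecidableEq β] (A : Matrix α β ℂ) : ℝ :=
  ‖LinearMap.toContinuousLinearMap (Matrix.toEuclideanLin A)‖

/-- Euclidean norm of a complex vector. -/
def vNorm {α : Type*} [Fintype α] (v : α → ℂ) : ℝ :=
  Real.sqrt (∑ i, ‖v i‖ ^ 2)

/-- `Λ_k(x^ℓ) ⊗ I_n`, a `(k+1)n × n` matrix whose `i`-th (0-based) `n × n` block is
`x^(ℓ(k−i)) I_n`. -/
def LamI (n k l : ℕ) (x : ℂ) : Matrix (Fin (k + 1) × Fin n) (Fin n) ℂ :=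
  Matrix.of fun p s => if p.2 = s then x ^ (l * (k - (p.1 : ℕ))) else 0

/-- `L_k(x^ℓ) ⊗ I_n`, a `kn × (k+1)n` matrix. -/
def LkI (n k l : ℕ) (x : ℂ) : Matrix (Fin k × Fin n) (Fin (k + 1) × Fin n) ℂ :=
  Matrix.of fun p q =>
    if p.2 = q.2 then
      if (q.1 : ℕ) = (p.1 : ℕ) then -1
      else if (q.1 : ℕ) = (p.1 : ℕ) + 1 then x ^ l else 0
    else 0

/-- The degree-`0` coefficient of `L_k(λ^ℓ) ⊗ I_n`. -/
def LkI0 (n k : ℕ) : Matrix (Fin k × Fin n) (Fin (k + 1) × Fin n) ℂ :=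
  Matrix.of fun p q => if p.2 = q.2 ∧ (q.1 : ℕ) = (p.1 : ℕ) then -1 else 0

/-- The degree-`ℓ` coefficient of `L_k(λ^ℓ) ⊗ I_n`. -/
def LkI1 (n k : ℕ) : Matrix (Fin k × Fin n) (Fin (k + 1) × Fin n) ℂ :=
  Matrix.of fun p q => if p.2 = q.2 ∧ (q.1 : ℕ) = (p.1 : ℕ) + 1 then 1 else 0

/-- `R_k(x^ℓ)`: `n × n` blocks `x^(ℓ(i−j)) I_n` for `j ≤ i` (0-based), `0` otherwise. -/
def Rmat (n k l : ℕ) (x : ℂ) : Matrix (Fin k × Fin n) (Fin (k + 1) × Fin n) ℂ :=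
  Matrix.of fun p q =>
    if p.2 = q.2 ∧ (q.1 : ℕ) ≤ (p.1 : ℕ) then x ^ (l * ((p.1 : ℕ) - (q.1 : ℕ))) else 0

/-- `S_k(x^ℓ)`: `n × n` blocks `x^(ℓ(k+i−j)) I_n` for `i < j` (0-based), `0` otherwise. -/
def Smat (n k l : ℕ) (x : ℂ) : Matrix (Fin k × Fin n) (Fin (k + 1) × Fin n) ℂ :=
  Matrix.of fun p q =>
    if p.2 = q.2 ∧ (p.1 : ℕ) < (q.1 : ℕ) then x ^ (l * (k + (p.1 : ℕ) - (q.1 : ℕ))) else 0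

/-- The block column `H(x; p, q, N) = [Λ_p(x^ℓ) ⊗ I_n ; R_q(x^ℓ) N(x) (Λ_p(x^ℓ) ⊗ I_n)]`. -/
def Hmat (n l p q : ℕ) (N : ℂ → Matrix (Fin (q + 1) × Fin n) (Fin (p + 1) × Fin n) ℂ)
    (x : ℂ) : Matrix ((Fin (p + 1) × Fin n) ⊕ (Fin q × Fin n)) (Fin n) ℂ :=
  Matrix.of fun r c =>
    Sum.elim (fun a => LamI n p l x a c)
      (fun a => (Rmat n q l x * (N x * LamI n p l x)) a c) r

/-- The block column `G(x; p, q, N) = [x^(qℓ)(Λ_p(x^ℓ) ⊗ I_n) ; −S_q(x^ℓ) N(x) (Λ_p(x^ℓ) ⊗ I_n)]`. -/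
def Gmat (n l p q : ℕ) (N : ℂ → Matrix (Fin (q + 1) × Fin n) (Fin (p + 1) × Fin n) ℂ)
    (x : ℂ) : Matrix ((Fin (p + 1) × Fin n) ⊕ (Fin q × Fin n)) (Fin n) ℂ :=
  Matrix.of fun r c =>
    Sum.elim (fun a => x ^ (q * l) * LamI n p l x a c)
      (fun a => (-(Smat n q l x * (N x * LamI n p l x))) a c) r

/-- Coefficients of the `(ε,n,η,n)`-block Kronecker `ℓ`-ification
`ℒ(λ) = [[M(λ), L_η(λ^ℓ)ᵀ ⊗ I_n], [L_ε(λ^ℓ) ⊗ I_n, 0]]`. -/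
def LcalCoef (n l ε η : ℕ)
    (M : ℕ → Matrix (Fin (η + 1) × Fin n) (Fin (ε + 1) × Fin n) ℂ) (i : ℕ) :
    Matrix ((Fin (η + 1) × Fin n) ⊕ (Fin ε × Fin n))
      ((Fin (ε + 1) × Fin n) ⊕ (Fin η × Fin n)) ℂ :=
  Matrix.fromBlocks (M i)
    (if i = 0 then (LkI0 n η)ᵀ else if i = l then (LkI1 n η)ᵀ else 0)
    (if i = 0 then LkI0 n ε else if i = l then LkI1 n ε else 0) 0

/-- `det P(λ)` as a scalar polynomial, where `P(λ) = Σ_{i=0}^d A_i λ^i`. -/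
def detPoly (n d : ℕ) (A : ℕ → Matrix (Fin n) (Fin n) ℂ) : Polynomial ℂ :=
  (∑ i ∈ Finset.range (d + 1), (Polynomial.X : Polynomial ℂ) ^ i • (A i).map Polynomial.C).det

/-- The horizontal concatenation `[A_0 A_1 ⋯ A_d]`. -/
def rowConcat (n d : ℕ) (A : ℕ → Matrix (Fin n) (Fin n) ℂ) :
    Matrix (Fin n) (Fin (d + 1) × Fin n) ℂ :=
  Matrix.of fun r q => A (q.1 : ℕ) r q.2

/-- Coefficientwise eigenvalue condition number of `Q(λ) = Σ_{i=0}^N C_i λ^i` at the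
eigentriple `(v, x0, u)`. -/
def coeffCond {α β : Type*} [Fintype α] [Fintype β] [DecidableEq β] (N : ℕ)
    (C : ℕ → Matrix α β ℂ) (x0 : ℂ) (u : β → ℂ) (v : α → ℂ) : ℝ :=
  (∑ i ∈ Finset.range (N + 1), ‖x0‖ ^ i * sNorm (C i)) * vNorm u * vNorm v /
    (‖x0‖ * ‖dotProduct (star v) ((mpDer N C x0).mulVec u)‖)

/-- Normwise eigenvalue condition number of `P(λ) = Σ_{i=0}^d A_i λ^i` at `(y, x0, x)`. -/
def normCond (n d : ℕ) (A : ℕ → Matrix (Fin n) (Fin n) ℂ) (x0 : ℂ)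
    (x y : Fin n → ℂ) : ℝ :=
  sNorm (rowConcat n d A) * (∑ i ∈ Finset.range (d + 1), ‖x0‖ ^ i) *
      vNorm x * vNorm y /
    (‖x0‖ * ‖dotProduct (star y) ((mpDer d A x0).mulVec x)‖)

/-- Each `n × n` block of each coefficient `M_t`, `t = 0, …, ℓ`, is `0`, `I_n`,
or one of the coefficients `A_s` of `P`.  -/
def IsCompanionM (n d l ε η : ℕ) (A : ℕ → Matrix (Fin n) (Fin n) ℂ)
    (M : ℕ → Matrix (Fin (η + 1) × Fin n) (Fin (ε + 1) × Fin n) ℂ) : Prop :=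
  ∀ t ≤ l, ∀ (i : Fin (η + 1)) (j : Fin (ε + 1)),
    (Matrix.of fun r s => M t (i, r) (j, s)) = 0 ∨
    (Matrix.of fun r s => M t (i, r) (j, s)) = (1 : Matrix (Fin n) (Fin n) ℂ) ∨
    ∃ s ≤ d, (Matrix.of fun r s' => M t (i, r) (j, s')) = A s

/-!
In block form `ℒ(λ) H(λ)` has top block `(M + (L_ηᵀ R_η) M) Λ_ε` and bottom block `L_ε Λ_ε`
(every factor tensored with `I_n`, and evaluated at `y = λ^ℓ`). The bottom block vanishes since
`L_k(y) Λ_k(y) = 0`, and the identity `L_k(y)ᵀ R_k(y) + I = e_{k+1} Λ_k(y)ᵀ` turns the top block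
into `e_{η+1} Λ_ηᵀ M Λ_ε = e_{η+1} P`. The latter identity is the recurrence
`y · row_i R_k(y) = row_{i+1} R_k(y) - e_{i+1}ᵀ` between consecutive rows, once `R_k(y)` is
extended by the row `Λ_k(y)ᵀ`; the mixed-product rule of the Kronecker product lifts both
identities to blocks.
-/

open scoped Kronecker

section Scalar

variable {R : Type*} [CommRing R]

/-- `L_k(y)`. -/
def pencilL (k : ℕ) (y : R) : Matrix (Fin k) (Fin (k + 1)) R :=
  of fun i j => (if j = i.succ then y else 0) - if j = i.castSucc then 1 else 0

/-- `Λ_k(y) = (y^k, …, y, 1)`. -/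
def monomialVec (k : ℕ) (y : R) : Fin (k + 1) → R := fun j => y ^ (k - j)

/-- The entries of `R_k(y)`, for rows `i` in all of `ℕ`: row `k` is `Λ_k(y)ᵀ`. -/
def lowerPow (y : R) (i j : ℕ) : R := if j ≤ i then y ^ (i - j) else 0

/-- `R_k(y)`. -/
def lowerR (k : ℕ) (y : R) : Matrix (Fin k) (Fin (k + 1)) R := of fun i j => lowerPow y i j

lemma pencilL_mulVec_monomialVec (k : ℕ) (y : R) : pencilL k y *ᵥ monomialVec k y = 0 := by
  ext i
  simp only [pencilL, monomialVec, mulVec, dotProduct, of_apply, sub_mul, ite_mul, one_mul,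
    zero_mul, Finset.sum_sub_distrib, Finset.sum_ite_eq', Finset.mem_univ, if_true, Fin.val_succ,
    Fin.val_castSucc, Pi.zero_apply]
  rw [← pow_succ', Nat.sub_add_eq, Nat.sub_add_cancel (by omega), sub_self]

lemma sum_mul_pencilL_apply (k : ℕ) (y : R) (w : ℕ → R) (i : Fin (k + 1)) :
    ∑ t : Fin k, w t * pencilL k y t i =
      (if i = 0 then 0 else y * w (i - 1)) - if i = Fin.last k then 0 else w i := by
  have hsucc := Fin.sum_univ_succ (fun m : Fin (k + 1) => if i = m then y * w (m - 1) else 0)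
  have hcast := Fin.sum_univ_castSucc (fun m : Fin (k + 1) => if i = m then w m else 0)
  simp only [Finset.sum_ite_eq, Finset.mem_univ, if_true, Fin.val_succ, add_tsub_cancel_right,
    Fin.val_castSucc] at hsucc hcast
  simp only [pencilL, of_apply, mul_sub, mul_ite, mul_zero, mul_one, Finset.sum_sub_distrib,
    mul_comm (w _) y]
  rw [eq_sub_of_add_eq' hsucc.symm, eq_sub_of_add_eq hcast.symm]
  clear hsucc hcast
  split_ifs <;> simp_all

lemma mul_lowerPow (y : R) (i j : ℕ) :
    y * lowerPow y i j = lowerPow y (i + 1) j - if j = i + 1 then 1 else 0 := by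
  unfold lowerPow
  rcases lt_trichotomy j (i + 1) with hj | rfl | hj
  · rw [Nat.lt_succ_iff] at hj
    simp [hj, hj.trans (Nat.le_succ i), Nat.succ_sub hj, pow_succ', (Nat.lt_succ_of_le hj).ne]
  · simp
  · simp [Nat.not_le.mpr hj, Nat.not_le.mpr (Nat.lt_of_succ_lt hj), hj.ne']

lemma pencilL_transpose_mul_lowerR_add_one (k : ℕ) (y : R) :
    (pencilL k y)ᵀ * lowerR k y + 1 =
      vecMulVec (Pi.single (Fin.last k) 1) (monomialVec k y) := by
  ext i ⟨j, hj⟩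
  simp only [Matrix.add_apply, mul_apply, transpose_apply, lowerR, of_apply, vecMulVec_apply,
    one_apply, mul_comm (pencilL k y _ i)]
  rw [sum_mul_pencilL_apply k y (lowerPow y · j) i]
  rcases Fin.eq_zero_or_eq_succ i with rfl | ⟨i, rfl⟩
  · simp only [if_true, zero_sub, Pi.single_apply, monomialVec, lowerPow, Fin.ext_iff,
      Fin.val_zero, Fin.val_last, Nat.le_zero, eq_comm (a := 0)]
    rcases eq_or_ne k 0 with rfl | hk
    · obtain rfl : j = 0 := by omega
      simp
    · simp [hk]
  · rw [if_neg (Fin.succ_ne_zero i), Fin.val_succ, Nat.add_sub_cancel, mul_lowerPow]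
    simp only [Pi.single_apply, monomialVec, Fin.ext_iff, Fin.val_succ, Fin.val_last,
      eq_comm (a := j)]
    by_cases hlast : (i : ℕ) + 1 = k
    · simp [hlast, lowerPow, Nat.lt_succ_iff.mp hj]
    · simp [hlast]

lemma sum_range_smul_ite_zero_last {V : Type*} [AddCommMonoid V] [Module R V] {l : ℕ}
    (hl : 1 ≤ l) (x : R) (A B : V) :
    ∑ i ∈ Finset.range (l + 1), x ^ i • (if i = 0 then A else if i = l then B else 0) =
      A + x ^ l • B := by
  have hsplit : ∀ i, x ^ i • (if i = 0 then A else if i = l then B else 0) =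
      (if i = 0 then A else 0) + if i = l then x ^ l • B else 0 := by
    intro i
    split_ifs <;> first | omega | (subst_vars; simp)
  simp only [hsplit, Finset.sum_add_distrib, Finset.sum_ite_eq', Finset.mem_range]
  rw [if_pos (by omega), if_pos (by omega)]

end Scalar

/-- `v ⊗ I`. -/
def blockCol {R ι : Type*} [Zero R] (m : Type*) [DecidableEq m] (v : ι → R) :
    Matrix (ι × m) m R :=
  of fun p s => if p.2 = s then v p.1 else 0

section BlockCol

variable {R ι m : Type*} [CommRing R] [DecidableEq m]

lemma blockCol_zero : blockCol m (0 : ι → R) = 0 := by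
  ext p s
  simp [blockCol]

lemma blockCol_mul_apply [Fintype m] {γ : Type*} (v : ι → R) (P : Matrix m γ R) (i : ι) (r : m)
    (c : γ) : (blockCol m v * P) (i, r) c = v i * P r c := by
  simp [blockCol, mul_apply, ite_mul]

lemma kronecker_one_mul_blockCol {κ : Type*} [Fintype κ] [Fintype m] (A : Matrix ι κ R)
    (v : κ → R) : A ⊗ₖ (1 : Matrix m m R) * blockCol m v = blockCol m (A *ᵥ v) := by
  ext ⟨i, r⟩ s
  simp [blockCol, mul_apply, one_apply, mulVec, dotProduct, Fintype.sum_prod_type, ite_mul,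
    mul_ite]

lemma blockCol_mul_transpose_blockCol [Fintype m] {κ : Type*} (v : ι → R) (w : κ → R) :
    blockCol m v * (blockCol m w)ᵀ = vecMulVec v w ⊗ₖ (1 : Matrix m m R) := by
  ext ⟨i, r⟩ ⟨j, s⟩
  simp [blockCol, mul_apply, one_apply, vecMulVec_apply, ite_mul, mul_ite, eq_comm]

end BlockCol

lemma LkI_eq_kronecker (n k l : ℕ) (x : ℂ) :
    LkI n k l x = pencilL k (x ^ l) ⊗ₖ (1 : Matrix (Fin n) (Fin n) ℂ) := by
  ext ⟨i, r⟩ ⟨j, s⟩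
  simp only [LkI, pencilL, of_apply, kronecker_apply, one_apply, Fin.ext_iff, Fin.val_succ,
    Fin.val_castSucc]
  split_ifs <;> first | omega | simp

lemma Rmat_eq_kronecker (n k l : ℕ) (x : ℂ) :
    Rmat n k l x = lowerR k (x ^ l) ⊗ₖ (1 : Matrix (Fin n) (Fin n) ℂ) := by
  ext ⟨i, r⟩ ⟨j, s⟩
  simp only [Rmat, lowerR, lowerPow, of_apply, kronecker_apply, one_apply, ← pow_mul]
  split_ifs <;> first | tauto | simp

lemma LamI_eq_blockCol (n k l : ℕ) (x : ℂ) :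
    LamI n k l x = blockCol (Fin n) (monomialVec k (x ^ l)) := by
  ext p s
  simp [LamI, blockCol, monomialVec, pow_mul]

lemma LkI_mul_LamI (n k l : ℕ) (x : ℂ) : LkI n k l x * LamI n k l x = 0 := by
  rw [LkI_eq_kronecker, LamI_eq_blockCol, kronecker_one_mul_blockCol,
    pencilL_mulVec_monomialVec, blockCol_zero]

lemma LkI_transpose_mul_Rmat_add_one (n k l : ℕ) (x : ℂ) :
    (LkI n k l x)ᵀ * Rmat n k l x + 1 =
      blockCol (Fin n) (Pi.single (Fin.last k) (1 : ℂ)) * (LamI n k l x)ᵀ := by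
  rw [LkI_eq_kronecker, Rmat_eq_kronecker, LamI_eq_blockCol, ← kroneckerMap_transpose,
    transpose_one, ← mul_kronecker_mul, mul_one, ← one_kronecker_one, ← add_kronecker,
    pencilL_transpose_mul_lowerR_add_one, blockCol_mul_transpose_blockCol]

lemma LkI0_add_smul_LkI1 (n k l : ℕ) (x : ℂ) : LkI0 n k + x ^ l • LkI1 n k = LkI n k l x := by
  ext ⟨i, r⟩ ⟨j, s⟩
  simp only [LkI0, LkI1, LkI, Matrix.add_apply, Matrix.smul_apply, of_apply, smul_eq_mul]
  split_ifs <;> first | omega | simp_all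

lemma mpEval_LcalCoef (n l ε η : ℕ) (hl : 1 ≤ l)
    (M : ℕ → Matrix (Fin (η + 1) × Fin n) (Fin (ε + 1) × Fin n) ℂ) (x : ℂ) :
    mpEval l (LcalCoef n l ε η M) x =
      fromBlocks (mpEval l M x) (LkI n η l x)ᵀ (LkI n ε l x) 0 := by
  ext (a | a) (b | b) <;>
    simp only [mpEval, LcalCoef, Matrix.sum_apply, Matrix.smul_apply, fromBlocks_apply₁₁,
      fromBlocks_apply₁₂, fromBlocks_apply₂₁, fromBlocks_apply₂₂, Matrix.zero_apply,
      transpose_apply, smul_zero, Finset.sum_const_zero]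
  all_goals
    rw [← LkI0_add_smul_LkI1, ← sum_range_smul_ite_zero_last hl, Matrix.sum_apply]
    refine Finset.sum_congr rfl fun i _ => ?_
    split_ifs <;> rfl

lemma Hmat_eq_fromRows (n l p q : ℕ)
    (N : ℂ → Matrix (Fin (q + 1) × Fin n) (Fin (p + 1) × Fin n) ℂ) (x : ℂ) :
    Hmat n l p q N x = fromRows (LamI n p l x) (Rmat n q l x * (N x * LamI n p l x)) := by
  ext (a | a) c <;> rfl

theorem stmt7_general (n d l ε η : ℕ) (hl : 1 ≤ l)
    (A : ℕ → Matrix (Fin n) (Fin n) ℂ)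
    (M : ℕ → Matrix (Fin (η + 1) × Fin n) (Fin (ε + 1) × Fin n) ℂ)
    (hM : ∀ x : ℂ, (LamI n η l x)ᵀ * mpEval l M x * LamI n ε l x = mpEval d A x) :
    ∀ x : ℂ,
      mpEval l (LcalCoef n l ε η M) x * Hmat n l ε η (mpEval l M) x =
        Matrix.of fun r c =>
          Sum.elim
            (fun a : Fin (η + 1) × Fin n =>
              if a.1 = Fin.last η then mpEval d A x a.2 c else 0)
            (fun _ : Fin ε × Fin n => (0 : ℂ)) r := by
  intro x
  have htop : mpEval l M x * LamI n ε l x +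
      (LkI n η l x)ᵀ * (Rmat n η l x * (mpEval l M x * LamI n ε l x)) =
      blockCol (Fin n) (Pi.single (Fin.last η) (1 : ℂ)) * mpEval d A x := by
    calc _ = ((LkI n η l x)ᵀ * Rmat n η l x + 1) * (mpEval l M x * LamI n ε l x) := by
          rw [Matrix.add_mul, Matrix.one_mul, Matrix.mul_assoc]; exact add_comm _ _
      _ = _ := by
          rw [LkI_transpose_mul_Rmat_add_one, ← hM x]; simp only [Matrix.mul_assoc]
  rw [mpEval_LcalCoef n l ε η hl, Hmat_eq_fromRows, fromBlocks_mul_fromRows, htop, LkI_mul_LamI,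
    Matrix.zero_mul, add_zero]
  ext (⟨i, r⟩ | a) c <;> simp [blockCol_mul_apply, Pi.single_apply]

/-- Right-sided factorization `ℒ(λ) H(λ; ε, η, M) = e_{η+1} ⊗ P(λ)`: the `(η+1)`-st
`n × n` block of the product is `P(λ)` and all other blocks are `0`. -/
theorem stmt7 (n d l ε η : ℕ) (hn : 0 < n) (hl : 1 ≤ l) (hd : d = l * (ε + η + 1))
    (A : ℕ → Matrix (Fin n) (Fin n) ℂ) (hdeg : A d ≠ 0)
    (M : ℕ → Matrix (Fin (η + 1) × Fin n) (Fin (ε + 1) × Fin n) ℂ)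
    (hM : ∀ x : ℂ, (LamI n η l x)ᵀ * mpEval l M x * LamI n ε l x = mpEval d A x) :
    ∀ x : ℂ,
      mpEval l (LcalCoef n l ε η M) x * Hmat n l ε η (mpEval l M) x =
        Matrix.of fun r c =>
          Sum.elim
            (fun a : Fin (η + 1) × Fin n =>
              if a.1 = Fin.last η then mpEval d A x a.2 c else 0)
            (fun _ : Fin ε × Fin n => (0 : ℂ)) r :=
  stmt7_general n d l ε η hl A M hM

end
end

section
/- Let P be a regular n×n complex matrix polynomial of degree d, let ℓ ≥ 1 divide d, let ℒ(λ) be an (ε,n,η,n)-block Kronecker ℓ-ification of P built from a solution M(λ) of (Λ_η(λ^ℓ)^T ⊗ I_n) M(λ) (Λ_ε(λ^ℓ) ⊗ I_n) = P(λ), and let λ0 ∈ ℂ be a simple eigenvalue of P, i.e., a root of the scalar polynomial det P(λ) of multiplicity exactly 1. (a) A nonzero vector w ∈ ℂ^{(d/ℓ)n} satisfies w* ℒ(λ0) = 0 if and only if w = [Λ_η(conj(λ0)^ℓ) ⊗ I_n ; R_ε(conj(λ0)^ℓ) M(λ0)* (Λ_η(conj(λ0)^ℓ) ⊗ I_n)]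 y for some nonzero y ∈ ℂ^n with y* P(λ0) = 0. (b) If in addition λ0 ≠ 0, then a nonzero w satisfies w* ℒ(λ0) = 0 if and only if w = [conj(λ0)^{εℓ} (Λ_η(conj(λ0)^ℓ) ⊗ I_n) ; −S_ε(conj(λ0)^ℓ) M(λ0)* (Λ_η(conj(λ0)^ℓ) ⊗ I_n)] y for some nonzero y with y* P(λ0) = 0. Here (·)* denotes conjugate transpose and conj(λ0) the complex conjugate of λ0. -/
open Matrix BigOperators

noncomputable section

/-!
Work with `u = conj w` instead of `w`: then `w* ℒ(λ₀) = 0` reads `uᵀ ℒ(λ₀) = 0`, which is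
polynomial in `λ₀`, and conjugating back at the end turns `M(λ₀)ᵀ` into `M(λ₀)*` and `λ₀` into
`conj λ₀`.

Split `u = (u₁, u₂)`. The condition is `(L_η ⊗ I) u₁ = 0` together with
`u₁ᵀ M + u₂ᵀ (L_ε ⊗ I) = 0`. The kernel of `L_k ⊗ I` is the range of `Λ_k ⊗ I`, so
`u₁ = (Λ_η ⊗ I) z`, and multiplying the second equation by `Λ_ε ⊗ I` (using `L_ε Λ_ε = 0`)
gives `zᵀ P(λ₀) = 0`. Since `L_k R_kᵀ = -I`, `u₂` is determined by `u₁`, and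
`R_kᵀ L_k = Λ_k e_lastᵀ - I` identifies it with the `R`-block of the `H` column. For `λ₀ ≠ 0`,
`S_k + λ^{kℓ} R_k` is the rank-one matrix `(λ^{iℓ})_i Λ_kᵀ`, which kills `Mᵀ Λ_η z` when
`zᵀ P = 0`; so the `G` column is the `H` column applied to `λ₀^{εℓ} z`.
-/

open ComplexConjugate

lemma sum_range_pow_smul_ite {R α : Type*} [Semiring R] [AddCommMonoid α] [Module R α] {l : ℕ}
    (hl : l ≠ 0) (x : R) (a b : α) :
    ∑ i ∈ Finset.range (l + 1), x ^ i • (if i = 0 then a else if i = l then b else 0) =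
      a + x ^ l • b := by
  rw [Finset.sum_eq_add_of_mem 0 l (by simp) (by simp) hl.symm fun i _ hi => by simp [hi.1, hi.2]]
  simp [hl]

lemma sum_fromBlocks {ι l m n o α : Type*} [AddCommMonoid α] (s : Finset ι)
    (A : ι → Matrix n l α) (B : ι → Matrix n m α) (C : ι → Matrix o l α) (D : ι → Matrix o m α) :
    ∑ i ∈ s, fromBlocks (A i) (B i) (C i) (D i) =
      fromBlocks (∑ i ∈ s, A i) (∑ i ∈ s, B i) (∑ i ∈ s, C i) (∑ i ∈ s, D i) := by
  classical
  induction s using Finset.induction_on with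
  | empty => simp
  | insert i s hi ih => simp [Finset.sum_insert hi, ih, fromBlocks_add]

lemma exists_ne_zero_and_and_eq_iff {α β : Type*} [Zero α] [Zero β] {p : α → Prop} {f : α → β}
    (hf : f 0 = 0) {w : β} (hw : w ≠ 0) :
    (∃ y, y ≠ 0 ∧ p y ∧ w = f y) ↔ ∃ y, p y ∧ w = f y :=
  ⟨fun ⟨y, _, hy⟩ => ⟨y, hy⟩, fun ⟨y, hpy, hwy⟩ => ⟨y, fun h => hw (by rw [hwy, h, hf]), hpy, hwy⟩⟩

section BlockKronecker

variable {n k l : ℕ} {x : ℂ}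

lemma lamI_mulVec_apply (z : Fin n → ℂ) (j : Fin (k + 1)) (s : Fin n) :
    (LamI n k l x *ᵥ z) (j, s) = x ^ (l * (k - j)) * z s := by
  simp [LamI, mulVec, dotProduct]

lemma vecMul_lamI_apply (v : Fin (k + 1) × Fin n → ℂ) (s : Fin n) :
    (v ᵥ* LamI n k l x) s = ∑ j, v (j, s) * x ^ (l * (k - j)) := by
  simp [LamI, vecMul, dotProduct, Fintype.sum_prod_type]

lemma lkI_mulVec_apply (u : Fin (k + 1) × Fin n → ℂ) (i : Fin k) (s : Fin n) :
    (LkI n k l x *ᵥ u) (i, s) = -u (i.castSucc, s) + x ^ l * u (i.succ, s) := by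
  simp only [mulVec, dotProduct, Fintype.sum_prod_type, LkI, of_apply, ite_mul, zero_mul]
  simp only [Finset.sum_ite_eq, Finset.mem_univ, if_true]
  rw [Fintype.sum_eq_add i.castSucc i.succ (by simp [Fin.ext_iff])]
  · simp
  · intro j hj
    simp only [ne_eq, Fin.ext_iff, Fin.val_castSucc, Fin.val_succ] at hj
    simp [hj]

lemma lkI_mul_apply {γ : Type*} (B : Matrix (Fin (k + 1) × Fin n) γ ℂ) (i : Fin k) (s : Fin n)
    (c : γ) : (LkI n k l x * B) (i, s) c = -B (i.castSucc, s) c + x ^ l * B (i.succ, s) c :=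
  lkI_mulVec_apply (fun q => B q c) i s

lemma lkI_mul_lamI : LkI n k l x * LamI n k l x = 0 := by
  ext ⟨i, s⟩ c
  rw [lkI_mul_apply, Matrix.zero_apply]
  simp only [LamI, of_apply, Fin.val_castSucc, Fin.val_succ]
  rw [show k - (i : ℕ) = k - (i + 1) + 1 by omega, mul_add_one, pow_add]
  split_ifs <;> ring

lemma lkI_mul_rmat_transpose : LkI n k l x * (Rmat n k l x)ᵀ = -1 := by
  ext ⟨i, s⟩ ⟨i', s'⟩
  rw [lkI_mul_apply, Matrix.neg_apply, Matrix.one_apply]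
  simp only [Rmat, transpose_apply, of_apply, Fin.val_castSucc, Fin.val_succ, Prod.mk.injEq,
    Fin.ext_iff]
  rcases lt_trichotomy (i : ℕ) i' with h | h | h
  · rw [show (i' : ℕ) - i = i' - (i + 1) + 1 by omega, mul_add_one, pow_add]
    split_ifs <;> first | omega | ring
  · split_ifs <;> first | omega | simp_all
  · split_ifs <;> first | omega | ring

lemma vecMul_lkI_injective : Function.Injective (· ᵥ* LkI n k l x) := by
  refine Function.LeftInverse.injective (g := fun w => -(w ᵥ* (Rmat n k l x)ᵀ)) fun v => ?_
  simp [vecMul_vecMul, lkI_mul_rmat_transpose, vecMul_neg]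

lemma eq_lamI_mulVec_of_lkI_mulVec_eq_zero {u : Fin (k + 1) × Fin n → ℂ}
    (h : LkI n k l x *ᵥ u = 0) : u = LamI n k l x *ᵥ fun s => u (Fin.last k, s) := by
  ext ⟨j, s⟩
  rw [lamI_mulVec_apply]
  induction j using Fin.reverseInduction with
  | last => simp
  | cast i ih =>
    have hi := congrFun h (i, s)
    rw [lkI_mulVec_apply, Pi.zero_apply, neg_add_eq_zero] at hi
    rw [hi, ih, Fin.val_castSucc, Fin.val_succ,
      show k - (i : ℕ) = k - (i + 1) + 1 by omega, mul_add_one, pow_add]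
    ring

lemma eq_lamI_mul_of_lkI_mul_eq_zero {γ : Type*} {X : Matrix (Fin (k + 1) × Fin n) γ ℂ}
    (h : LkI n k l x * X = 0) : X = LamI n k l x * X.submatrix (fun s => (Fin.last k, s)) id := by
  ext p c
  exact congrFun (eq_lamI_mulVec_of_lkI_mulVec_eq_zero (u := fun q => X q c)
    (funext fun p => congrFun (congrFun h p) c)) p

lemma rmat_transpose_mul_lkI :
    (Rmat n k l x)ᵀ * LkI n k l x =
      LamI n k l x * (1 : Matrix (Fin (k + 1) × Fin n) _ ℂ).submatrix (fun s => (Fin.last k, s)) id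
        - 1 := by
  have hker : LkI n k l x * ((Rmat n k l x)ᵀ * LkI n k l x + 1) = 0 := by
    rw [Matrix.mul_add, ← Matrix.mul_assoc, lkI_mul_rmat_transpose]
    simp
  rw [eq_sub_iff_add_eq, eq_lamI_mul_of_lkI_mul_eq_zero hker]
  congr 1
  ext s c
  simp only [submatrix_apply, Matrix.add_apply, id, mul_apply, transpose_apply, Rmat, of_apply,
    Fin.val_last]
  rw [Finset.sum_eq_zero fun q _ => by rw [if_neg fun h => q.1.isLt.not_ge h.2, zero_mul], zero_add]
  rfl

lemma rmat_mulVec_vecMul_lkI {v : Fin (k + 1) × Fin n → ℂ} (hv : v ᵥ* LamI n k l x = 0) :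
    (Rmat n k l x *ᵥ v) ᵥ* LkI n k l x = -v := by
  rw [← vecMul_transpose, vecMul_vecMul, rmat_transpose_mul_lkI, vecMul_sub, ← vecMul_vecMul, hv]
  simp

lemma smat_add_smul_rmat :
    Smat n k l x + x ^ (l * k) • Rmat n k l x =
      of fun p q => if p.2 = q.2 then x ^ (l * p.1) * x ^ (l * (k - q.1)) else 0 := by
  ext ⟨i, s⟩ ⟨j, t⟩
  simp only [Smat, Rmat, Matrix.add_apply, Matrix.smul_apply, of_apply, smul_eq_mul]
  have := j.isLt
  split_ifs <;> simp only [mul_zero, add_zero, zero_add, ← pow_add, ← mul_add] <;>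
    first | omega | rfl | (congr 2; omega)

lemma smat_add_smul_rmat_mulVec (v : Fin (k + 1) × Fin n → ℂ) :
    (Smat n k l x + x ^ (l * k) • Rmat n k l x) *ᵥ v =
      fun p => x ^ (l * p.1) * (v ᵥ* LamI n k l x) p.2 := by
  ext ⟨i, s⟩
  rw [smat_add_smul_rmat]
  simp only [mulVec, dotProduct, of_apply, ite_mul, zero_mul, Fintype.sum_prod_type,
    Finset.sum_ite_eq, Finset.mem_univ, if_true, vecMul_lamI_apply, Finset.mul_sum]
  exact Finset.sum_congr rfl fun j _ => by ring

lemma lkI_eq_add : LkI n k l x = LkI0 n k + x ^ l • LkI1 n k := by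
  ext ⟨i, s⟩ ⟨j, t⟩
  simp only [LkI, LkI0, LkI1, Matrix.add_apply, Matrix.smul_apply, of_apply, smul_eq_mul]
  split_ifs <;> first | omega | simp_all

end BlockKronecker

def blockKroneckerAt (n l ε η : ℕ) (M : Matrix (Fin (η + 1) × Fin n) (Fin (ε + 1) × Fin n) ℂ)
    (x : ℂ) :
    Matrix ((Fin (η + 1) × Fin n) ⊕ (Fin ε × Fin n)) ((Fin (ε + 1) × Fin n) ⊕ (Fin η × Fin n)) ℂ :=
  fromBlocks M (LkI n η l x)ᵀ (LkI n ε l x) 0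

lemma mpEval_lcalCoef {n l ε η : ℕ} (hl : l ≠ 0)
    (M : ℕ → Matrix (Fin (η + 1) × Fin n) (Fin (ε + 1) × Fin n) ℂ) (x : ℂ) :
    mpEval l (LcalCoef n l ε η M) x = blockKroneckerAt n l ε η (mpEval l M x) x := by
  simp only [mpEval, LcalCoef, blockKroneckerAt, fromBlocks_smul, sum_fromBlocks]
  rw [sum_range_pow_smul_ite hl, sum_range_pow_smul_ite hl, lkI_eq_add, lkI_eq_add, transpose_add,
    transpose_smul]
  simp only [smul_zero, Finset.sum_const_zero]

lemma hmat_eq_fromRows {n l p q : ℕ}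
    (N : ℂ → Matrix (Fin (q + 1) × Fin n) (Fin (p + 1) × Fin n) ℂ) (x : ℂ) :
    Hmat n l p q N x = fromRows (LamI n p l x) (Rmat n q l x * (N x * LamI n p l x)) := by
  ext (_ | _) _ <;> rfl

lemma gmat_eq_fromRows {n l p q : ℕ}
    (N : ℂ → Matrix (Fin (q + 1) × Fin n) (Fin (p + 1) × Fin n) ℂ) (x : ℂ) :
    Gmat n l p q N x =
      fromRows (x ^ (q * l) • LamI n p l x) (-(Smat n q l x * (N x * LamI n p l x))) := by
  ext (_ | _) _ <;> rfl

section NullVectors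

variable {n l ε η : ℕ} {x : ℂ} {M : Matrix (Fin (η + 1) × Fin n) (Fin (ε + 1) × Fin n) ℂ}

lemma vecMul_blockKroneckerAt_eq_zero_iff (u : (Fin (η + 1) × Fin n) ⊕ (Fin ε × Fin n) → ℂ) :
    u ᵥ* blockKroneckerAt n l ε η M x = 0 ↔
      (u ∘ Sum.inl) ᵥ* M + (u ∘ Sum.inr) ᵥ* LkI n ε l x = 0 ∧
        LkI n η l x *ᵥ (u ∘ Sum.inl) = 0 := by
  rw [blockKroneckerAt, vecMul_fromBlocks, vecMul_zero, add_zero, vecMul_transpose,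
    ← Sum.elim_zero_zero, Sum.elim_eq_iff]

lemma transpose_mul_lamI_mulVec_vecMul_lamI (z : Fin n → ℂ) :
    ((Mᵀ * LamI n η l x) *ᵥ z) ᵥ* LamI n ε l x = z ᵥ* ((LamI n η l x)ᵀ * M * LamI n ε l x) := by
  rw [← mulVec_transpose, mulVec_mulVec, ← mulVec_transpose]
  simp only [transpose_mul, transpose_transpose, Matrix.mul_assoc]

lemma hmat_mulVec_vecMul_blockKroneckerAt {z : Fin n → ℂ}
    (hz : z ᵥ* ((LamI n η l x)ᵀ * M * LamI n ε l x) = 0) :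
    (Hmat n l η ε (fun _ => Mᵀ) x *ᵥ z) ᵥ* blockKroneckerAt n l ε η M x = 0 := by
  rw [vecMul_blockKroneckerAt_eq_zero_iff, hmat_eq_fromRows, fromRows_mulVec, Sum.elim_comp_inl,
    Sum.elim_comp_inr, mulVec_mulVec, lkI_mul_lamI, zero_mulVec, ← mulVec_mulVec,
    rmat_mulVec_vecMul_lkI (by rw [transpose_mul_lamI_mulVec_vecMul_lamI, hz]), ← mulVec_transpose,
    mulVec_mulVec, add_neg_cancel]
  exact ⟨rfl, rfl⟩

lemma eq_of_vecMul_blockKroneckerAt_eq_zero {u u' : (Fin (η + 1) × Fin n) ⊕ (Fin ε × Fin n) → ℂ}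
    (hu : u ᵥ* blockKroneckerAt n l ε η M x = 0) (hu' : u' ᵥ* blockKroneckerAt n l ε η M x = 0)
    (hinl : u ∘ Sum.inl = u' ∘ Sum.inl) : u = u' := by
  rw [vecMul_blockKroneckerAt_eq_zero_iff] at hu hu'
  have hL : (u ∘ Sum.inr) ᵥ* LkI n ε l x = (u' ∘ Sum.inr) ᵥ* LkI n ε l x := by
    rw [eq_neg_of_add_eq_zero_right hu.1, eq_neg_of_add_eq_zero_right hu'.1, hinl]
  have hinr : u ∘ Sum.inr = u' ∘ Sum.inr := vecMul_lkI_injective hL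
  rw [← Sum.elim_comp_inl_inr u, ← Sum.elim_comp_inl_inr u', hinl, hinr]

theorem vecMul_blockKroneckerAt_eq_zero_iff_exists_hmat
    (u : (Fin (η + 1) × Fin n) ⊕ (Fin ε × Fin n) → ℂ) :
    u ᵥ* blockKroneckerAt n l ε η M x = 0 ↔
      ∃ z : Fin n → ℂ, z ᵥ* ((LamI n η l x)ᵀ * M * LamI n ε l x) = 0 ∧
        u = Hmat n l η ε (fun _ => Mᵀ) x *ᵥ z := by
  refine ⟨fun hu => ?_, fun ⟨z, hz, hu⟩ => hu ▸ hmat_mulVec_vecMul_blockKroneckerAt hz⟩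
  have hnull := (vecMul_blockKroneckerAt_eq_zero_iff u).mp hu
  set z : Fin n → ℂ := fun s => u (Sum.inl (Fin.last η, s))
  have hinl : u ∘ Sum.inl = LamI n η l x *ᵥ z := eq_lamI_mulVec_of_lkI_mulVec_eq_zero hnull.2
  have hz : z ᵥ* ((LamI n η l x)ᵀ * M * LamI n ε l x) = 0 := by
    rw [← vecMul_vecMul, ← vecMul_vecMul, vecMul_transpose, ← hinl,
      eq_neg_of_add_eq_zero_left hnull.1, neg_vecMul, vecMul_vecMul, lkI_mul_lamI, vecMul_zero,
      neg_zero]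
  refine ⟨z, hz, eq_of_vecMul_blockKroneckerAt_eq_zero hu
    (hmat_mulVec_vecMul_blockKroneckerAt hz) ?_⟩
  rw [hinl, hmat_eq_fromRows, fromRows_mulVec, Sum.elim_comp_inl]

lemma gmat_mulVec_eq_hmat_mulVec {z : Fin n → ℂ}
    (hz : z ᵥ* ((LamI n η l x)ᵀ * M * LamI n ε l x) = 0) :
    Gmat n l η ε (fun _ => Mᵀ) x *ᵥ z = Hmat n l η ε (fun _ => Mᵀ) x *ᵥ (x ^ (ε * l) • z) := by
  have hsum : (Smat n ε l x + x ^ (l * ε) • Rmat n ε l x) *ᵥ ((Mᵀ * LamI n η l x) *ᵥ z) = 0 := by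
    rw [smat_add_smul_rmat_mulVec, transpose_mul_lamI_mulVec_vecMul_lamI, hz]
    ext
    simp
  rw [add_mulVec, smul_mulVec, mulVec_mulVec, mulVec_mulVec] at hsum
  rw [gmat_eq_fromRows, hmat_eq_fromRows, fromRows_mulVec, fromRows_mulVec, Sum.elim_eq_iff,
    smul_mulVec, mulVec_smul, mulVec_smul, neg_mulVec, mul_comm ε l, neg_eq_iff_add_eq_zero]
  exact ⟨rfl, hsum⟩

theorem vecMul_blockKroneckerAt_eq_zero_iff_exists_gmat (hx : x ≠ 0)
    (u : (Fin (η + 1) × Fin n) ⊕ (Fin ε × Fin n) → ℂ) :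
    u ᵥ* blockKroneckerAt n l ε η M x = 0 ↔
      ∃ z : Fin n → ℂ, z ᵥ* ((LamI n η l x)ᵀ * M * LamI n ε l x) = 0 ∧
        u = Gmat n l η ε (fun _ => Mᵀ) x *ᵥ z := by
  rw [vecMul_blockKroneckerAt_eq_zero_iff_exists_hmat]
  constructor
  · rintro ⟨z, hz, rfl⟩
    have hc : x ^ (ε * l) ≠ 0 := pow_ne_zero _ hx
    refine ⟨(x ^ (ε * l))⁻¹ • z, by rw [smul_vecMul, hz, smul_zero], ?_⟩
    rw [gmat_mulVec_eq_hmat_mulVec (by rw [smul_vecMul, hz, smul_zero]), smul_smul,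
      mul_inv_cancel₀ hc, one_smul]
  · rintro ⟨z, hz, rfl⟩
    exact ⟨_, by rw [smul_vecMul, hz, smul_zero], gmat_mulVec_eq_hmat_mulVec hz⟩

end NullVectors

section Conjugation

variable {n l : ℕ} {x : ℂ}

lemma lamI_map_conj {k : ℕ} : (LamI n k l (conj x)).map conj = LamI n k l x := by
  ext
  simp [LamI, apply_ite conj]

lemma rmat_map_conj {k : ℕ} : (Rmat n k l (conj x)).map conj = Rmat n k l x := by
  ext
  simp [Rmat, apply_ite conj]

lemma smat_map_conj {k : ℕ} : (Smat n k l (conj x)).map conj = Smat n k l x := by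
  ext
  simp [Smat, apply_ite conj]

lemma conjTranspose_map_conj {m o : Type*} (N : Matrix m o ℂ) : Nᴴ.map conj = Nᵀ := by
  ext
  simp

lemma hmat_map_conj {p q : ℕ} (N : Matrix (Fin (p + 1) × Fin n) (Fin (q + 1) × Fin n) ℂ) :
    (Hmat n l p q (fun _ => Nᴴ) (conj x)).map conj = Hmat n l p q (fun _ => Nᵀ) x := by
  rw [hmat_eq_fromRows, hmat_eq_fromRows, fromRows_map, Matrix.map_mul, Matrix.map_mul,
    lamI_map_conj, rmat_map_conj, conjTranspose_map_conj]

lemma gmat_map_conj {p q : ℕ} (N : Matrix (Fin (p + 1) × Fin n) (Fin (q + 1) × Fin n) ℂ) :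
    (Gmat n l p q (fun _ => Nᴴ) (conj x)).map conj = Gmat n l p q (fun _ => Nᵀ) x := by
  rw [gmat_eq_fromRows, gmat_eq_fromRows, fromRows_map,
    Matrix.map_smulₛₗ _ conj _ fun _ => map_mul conj _ _, Matrix.map_neg _ (map_neg conj),
    Matrix.map_mul, Matrix.map_mul, lamI_map_conj, smat_map_conj, conjTranspose_map_conj, map_pow,
    Complex.conj_conj]

lemma star_eq_map_conj_mulVec_star_iff {m o : Type*} [Fintype o] (B : Matrix m o ℂ) (w : m → ℂ)
    (y : o → ℂ) : star w = B.map conj *ᵥ star y ↔ w = B *ᵥ y := by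
  have : star (B *ᵥ y) = B.map conj *ᵥ star y := by
    rw [star_mulVec, ← mulVec_transpose]
    rfl
  rw [← this, star_inj]

end Conjugation

section StarForm

variable {n l ε η : ℕ} {x : ℂ} {M : Matrix (Fin (η + 1) × Fin n) (Fin (ε + 1) × Fin n) ℂ}

theorem star_vecMul_blockKroneckerAt_eq_zero_iff_exists_hmat
    (w : (Fin (η + 1) × Fin n) ⊕ (Fin ε × Fin n) → ℂ) :
    star w ᵥ* blockKroneckerAt n l ε η M x = 0 ↔
      ∃ y : Fin n → ℂ, star y ᵥ* ((LamI n η l x)ᵀ * M * LamI n ε l x) = 0 ∧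
        w = Hmat n l η ε (fun _ => Mᴴ) (conj x) *ᵥ y := by
  rw [vecMul_blockKroneckerAt_eq_zero_iff_exists_hmat, star_involutive.surjective.exists,
    ← hmat_map_conj]
  simp only [star_eq_map_conj_mulVec_star_iff]

theorem star_vecMul_blockKroneckerAt_eq_zero_iff_exists_gmat (hx : x ≠ 0)
    (w : (Fin (η + 1) × Fin n) ⊕ (Fin ε × Fin n) → ℂ) :
    star w ᵥ* blockKroneckerAt n l ε η M x = 0 ↔
      ∃ y : Fin n → ℂ, star y ᵥ* ((LamI n η l x)ᵀ * M * LamI n ε l x) = 0 ∧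
        w = Gmat n l η ε (fun _ => Mᴴ) (conj x) *ᵥ y := by
  rw [vecMul_blockKroneckerAt_eq_zero_iff_exists_gmat hx, star_involutive.surjective.exists,
    ← gmat_map_conj]
  simp only [star_eq_map_conj_mulVec_star_iff]

end StarForm

theorem stmt12_general (n d l ε η : ℕ) (hl : 1 ≤ l)
    (A : ℕ → Matrix (Fin n) (Fin n) ℂ)
    (M : ℕ → Matrix (Fin (η + 1) × Fin n) (Fin (ε + 1) × Fin n) ℂ)
    (hM : ∀ x : ℂ, (LamI n η l x)ᵀ * mpEval l M x * LamI n ε l x = mpEval d A x)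
    (lam0 : ℂ) :
    (∀ w : ((Fin (η + 1) × Fin n) ⊕ (Fin ε × Fin n)) → ℂ, w ≠ 0 →
        ((mpEval l (LcalCoef n l ε η M) lam0).vecMul (star w) = 0 ↔
          ∃ y : Fin n → ℂ, y ≠ 0 ∧ (mpEval d A lam0).vecMul (star y) = 0 ∧
            w = (Hmat n l η ε (fun _ => (mpEval l M lam0)ᴴ)
                  (starRingEnd ℂ lam0)).mulVec y)) ∧
      (lam0 ≠ 0 →
        ∀ w : ((Fin (η + 1) × Fin n) ⊕ (Fin ε × Fin n)) → ℂ, w ≠ 0 →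
          ((mpEval l (LcalCoef n l ε η M) lam0).vecMul (star w) = 0 ↔
            ∃ y : Fin n → ℂ, y ≠ 0 ∧ (mpEval d A lam0).vecMul (star y) = 0 ∧
              w = (Gmat n l η ε (fun _ => (mpEval l M lam0)ᴴ)
                    (starRingEnd ℂ lam0)).mulVec y)) := by
  rw [mpEval_lcalCoef (by omega), ← hM lam0]
  refine ⟨fun w hw => ?_, fun hlam0 w hw => ?_⟩
  · exact (star_vecMul_blockKroneckerAt_eq_zero_iff_exists_hmat w).trans
      (exists_ne_zero_and_and_eq_iff (mulVec_zero _) hw).symm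
  · exact (star_vecMul_blockKroneckerAt_eq_zero_iff_exists_gmat hlam0 w).trans
      (exists_ne_zero_and_and_eq_iff (mulVec_zero _) hw).symm

/-- Left eigenvector formulas for a simple eigenvalue `lam0` of `P`:
(a) a nonzero `w` satisfies `w* ℒ(lam0) = 0` iff
`w = [Λ_η(conj lam0 ^ ℓ) ⊗ I_n ; R_ε(conj lam0 ^ ℓ) M(lam0)* (Λ_η(conj lam0 ^ ℓ) ⊗ I_n)] y`
for some nonzero `y` with `y* P(lam0) = 0`; (b) if moreover `lam0 ≠ 0`, the analogous
statement with the `G`-shaped block column. -/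
theorem stmt12 (n d l ε η : ℕ) (hn : 0 < n) (hl : 1 ≤ l) (hd : d = l * (ε + η + 1))
    (A : ℕ → Matrix (Fin n) (Fin n) ℂ) (hdeg : A d ≠ 0)
    (hreg : detPoly n d A ≠ 0)
    (M : ℕ → Matrix (Fin (η + 1) × Fin n) (Fin (ε + 1) × Fin n) ℂ)
    (hM : ∀ x : ℂ, (LamI n η l x)ᵀ * mpEval l M x * LamI n ε l x = mpEval d A x)
    (lam0 : ℂ) (hsimple : (detPoly n d A).rootMultiplicity lam0 = 1) :
    (∀ w : ((Fin (η + 1) × Fin n) ⊕ (Fin ε × Fin n)) → ℂ, w ≠ 0 →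
        ((mpEval l (LcalCoef n l ε η M) lam0).vecMul (star w) = 0 ↔
          ∃ y : Fin n → ℂ, y ≠ 0 ∧ (mpEval d A lam0).vecMul (star y) = 0 ∧
            w = (Hmat n l η ε (fun _ => (mpEval l M lam0)ᴴ)
                  (starRingEnd ℂ lam0)).mulVec y)) ∧
      (lam0 ≠ 0 →
        ∀ w : ((Fin (η + 1) × Fin n) ⊕ (Fin ε × Fin n)) → ℂ, w ≠ 0 →
          ((mpEval l (LcalCoef n l ε η M) lam0).vecMul (star w) = 0 ↔
            ∃ y : Fin n → ℂ, y ≠ 0 ∧ (mpEval d A lam0).vecMul (star y) = 0 ∧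
              w = (Gmat n l η ε (fun _ => (mpEval l M lam0)ᴴ)
                    (starRingEnd ℂ lam0)).mulVec y)) :=
  stmt12_general n d l ε η hl A M hM lam0

end
end
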